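/- Let l̃ : ℝ → ℝ be a C^∞ function with |l̃| ≤ 1 and l̃(x) = 1 whenever |x| ≤ 1/4; let ℓ ∈ ℕ and L := sup{|l̃^{(p)}(x)| : x ∈ ℝ, 0 ≤ p ≤ ℓ}, assumed finite. Let d ≥ 1, τ > 0, 0 < γ < 1, and let k ∈ ℤ^d be nonzero. Define ψ_k : ℝ^d → ℝ by ψ_k(η) = (1 − l̃(⟨k,η⟩|k|₁^τ/γ))/⟨k,η⟩ if ⟨k,η⟩ ≠ 0, and ψ_k(η) = 0 if ⟨k,η⟩ = 0. Then ψ_k is C^∞ on all of ℝ^d, and there exists a constant C depending only on ℓ and L such that for every n with 0 ≤ n ≤ ℓ and every η ∈ ℝ^d, the norm of the n-th iterated Fréchet derivative of ψ_k at η is at most C · |k|₁^{(τ+1)n+τ} · γ^{−(n+1)}. -/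

import Mathlib

/-!
With `c = |k|₁^τ / γ` and `φ t = (1 - l̃ t) / t` one has `ψ_k η = c · φ (c ⟨k, η⟩)`.
Since `l̃ = 1` near `0`, `φ` vanishes on `|t| < 1/4` and is smooth; for `|t| ≥ 1/4` the Leibniz
rule together with `|D^j t⁻¹| = j! / |t|^(j+1)` bounds `D^n φ` by `(1 + |L|) (n+1)! 4^(n+1)`.
Composing with the linear form `c ⟨k, ·⟩`, whose norm is at most `c |k|₁`, gives
`‖D^n ψ_k‖ ≤ C c^(n+1) |k|₁^n = C |k|₁^((τ+1)n+τ) γ^(-(n+1))`.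
-/

open scoped BigOperators

/-- The small-divisor function `ψ_k(η) = (1 - l̃(⟨k,η⟩|k|₁^τ/γ))/⟨k,η⟩` (extended by `0`
across the hyperplane `⟨k,η⟩ = 0`). -/
noncomputable def smallDivisor (d : ℕ) (τ γ : ℝ) (ltil : ℝ → ℝ) (k : Fin d → ℤ)
    (η : Fin d → ℝ) : ℝ :=
  if (∑ i, (k i : ℝ) * η i) = 0 then 0
  else (1 - ltil ((∑ i, (k i : ℝ) * η i) * (∑ i, |(k i : ℝ)|) ^ τ / γ)) /
    (∑ i, (k i : ℝ) * η i)

open Finset Filter Topology Nat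

theorem norm_iteratedFDeriv_inv (m : ℕ) (t : ℝ) :
    ‖iteratedFDeriv ℝ m (fun s : ℝ => s⁻¹) t‖ = m ! / |t| ^ (m + 1) := by
  rw [norm_iteratedFDeriv_eq_norm_iteratedDeriv, iteratedDeriv_eq_iterate]
  change ‖deriv^[m] Inv.inv t‖ = _
  rw [iter_deriv_inv, show (-1 - m : ℤ) = -((m + 1 : ℕ) : ℤ) by push_cast; ring, zpow_neg,
    zpow_natCast]
  simp [div_eq_mul_inv]

theorem norm_iteratedFDeriv_inv_le (m : ℕ) {r t : ℝ} (hr : 0 < r) (ht : r ≤ |t|) :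
    ‖iteratedFDeriv ℝ m (fun s : ℝ => s⁻¹) t‖ ≤ m ! / r ^ (m + 1) := by
  rw [norm_iteratedFDeriv_inv]
  gcongr

theorem choose_mul_factorial_div_pow_le {n i : ℕ} (hi : i ≤ n) {r : ℝ} (hr : 0 < r)
    (hr1 : r ≤ 1) :
    (n.choose i : ℝ) * ((n - i)! / r ^ (n - i + 1)) ≤ n ! / r ^ (n + 1) := by
  have hfact : n.choose i * (n - i)! ≤ n ! := by
    rw [← choose_mul_factorial_mul_factorial hi, mul_right_comm]
    exact Nat.le_mul_of_pos_right _ (factorial_pos i)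
  rw [← mul_div_assoc]
  exact div_le_div₀ (by positivity) (mod_cast hfact) (by positivity)
    (pow_le_pow_of_le_one hr.le hr1 (by omega))

section OneSubDiv

variable {f : ℝ → ℝ}

theorem contDiff_one_sub_div {n : WithTop ℕ∞} (hf : ContDiff ℝ n f) (h1 : f =ᶠ[𝓝 0] 1) :
    ContDiff ℝ n (fun t => (1 - f t) / t) := by
  refine contDiff_iff_contDiffAt.2 fun t => ?_
  rcases eq_or_ne t 0 with rfl | ht
  · refine (contDiffAt_const (c := (0 : ℝ))).congr_of_eventuallyEq ?_
    filter_upwards [h1] with s hs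
    simp [hs]
  · exact (contDiffAt_const.sub hf.contDiffAt).div contDiffAt_id ht

theorem norm_iteratedFDeriv_one_sub_le {ℓ : ℕ} {L : ℝ}
    (hL : ∀ p ≤ ℓ, ∀ x, |iteratedDeriv p f x| ≤ L) {i : ℕ} (hi : i ≤ ℓ) (x : ℝ) :
    ‖iteratedFDeriv ℝ i (fun s => 1 - f s) x‖ ≤ 1 + L := by
  rw [norm_iteratedFDeriv_eq_norm_iteratedDeriv, Real.norm_eq_abs]
  rcases Nat.eq_zero_or_pos i with rfl | hi0
  · have := hL 0 (Nat.zero_le _) x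
    rw [iteratedDeriv_zero] at this ⊢
    linarith [abs_sub (1 : ℝ) (f x), abs_one (α := ℝ)]
  · rw [iteratedDeriv_const_sub hi0, iteratedDeriv_neg, abs_neg]
    linarith [hL i hi x]

theorem norm_iteratedFDeriv_one_sub_div_le {n : ℕ} {r M : ℝ} (hf : ContDiff ℝ n f)
    (hr : 0 < r) (hr1 : r ≤ 1) (h1 : ∀ x, |x| < r → f x = 1)
    (hM : ∀ i ≤ n, ∀ x, ‖iteratedFDeriv ℝ i (fun s => 1 - f s) x‖ ≤ M) (t : ℝ) :
    ‖iteratedFDeriv ℝ n (fun t => (1 - f t) / t) t‖ ≤ M * (n + 1)! / r ^ (n + 1) := by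
  have hM0 : 0 ≤ M := (norm_nonneg _).trans (hM 0 (Nat.zero_le n) t)
  rcases lt_or_ge |t| r with ht | ht
  · have hzero : (fun t => (1 - f t) / t) =ᶠ[𝓝 t] fun _ => 0 := by
      filter_upwards [(isOpen_lt continuous_abs continuous_const).mem_nhds ht] with s hs
      simp [h1 s hs]
    rw [(hzero.iteratedFDeriv ℝ n).eq_of_nhds, iteratedFDeriv_fun_zero, Pi.zero_apply,
      norm_zero]
    positivity
  · have ht0 : t ≠ 0 := by
      rintro rfl
      rw [abs_zero] at ht
      exact hr.not_ge ht
    have hU : IsOpen {s : ℝ | s ≠ 0} := isOpen_compl_singleton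
    have hdiv : (fun t => (1 - f t) / t) = fun t => (1 - f t) * t⁻¹ :=
      funext fun s => div_eq_mul_inv _ _
    rw [hdiv, ← iteratedFDerivWithin_of_isOpen n hU ht0]
    refine (norm_iteratedFDerivWithin_mul_le (contDiff_const.sub hf).contDiffOn
      (fun s hs => (contDiffAt_inv ℝ hs).contDiffWithinAt) hU.uniqueDiffOn ht0 le_rfl).trans ?_
    calc _ ≤ ∑ _i ∈ range (n + 1), M * (n ! / r ^ (n + 1)) := by
          refine sum_le_sum fun i hi => ?_
          have hi : i ≤ n := Nat.lt_succ_iff.1 (mem_range.1 hi)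
          calc _ ≤ (n.choose i : ℝ) * M * ((n - i)! / r ^ (n - i + 1)) := by
                gcongr
                · exact (congrArg norm (iteratedFDerivWithin_of_isOpen i hU ht0)).trans_le
                    (hM i hi t)
                · exact (congrArg norm (iteratedFDerivWithin_of_isOpen _ hU ht0)).trans_le
                    (norm_iteratedFDeriv_inv_le _ hr ht)
            _ = M * (n.choose i * ((n - i)! / r ^ (n - i + 1))) := by ring
            _ ≤ M * (n ! / r ^ (n + 1)) := by
                gcongr
                exact choose_mul_factorial_div_pow_le hi hr hr1
      _ = M * (n + 1)! / r ^ (n + 1) := by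
          rw [sum_const, card_range, nsmul_eq_mul, factorial_succ]
          push_cast
          ring

end OneSubDiv

section Composition

variable {E : Type*} [NormedAddCommGroup E] [NormedSpace ℝ E]

theorem ContinuousLinearMap.norm_iteratedFDeriv_comp_right_le {F G : Type*}
    [NormedAddCommGroup F] [NormedSpace ℝ F] [NormedAddCommGroup G] [NormedSpace ℝ G]
    (g : G →L[ℝ] E) {f : E → F} {n : ℕ} (hf : ContDiff ℝ n f) (x : G) :
    ‖iteratedFDeriv ℝ n (f ∘ g) x‖ ≤ ‖iteratedFDeriv ℝ n f (g x)‖ * ‖g‖ ^ n := by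
  rw [g.iteratedFDeriv_comp_right hf x le_rfl]
  refine (ContinuousMultilinearMap.norm_compContinuousLinearMap_le _ _).trans_eq ?_
  rw [prod_const, Finset.card_univ, Fintype.card_fin]

theorem norm_iteratedFDeriv_mul_comp_smul_le {g : ℝ → ℝ} {n : ℕ} {B : ℝ}
    (hg : ContDiff ℝ n g) (hB : ∀ s, ‖iteratedFDeriv ℝ n g s‖ ≤ B) (c : ℝ) (u : E →L[ℝ] ℝ)
    (x : E) :
    ‖iteratedFDeriv ℝ n (fun y => c * g (c * u y)) x‖ ≤ B * |c| ^ (n + 1) * ‖u‖ ^ n := by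
  have hcomp : (fun y => c * g (c * u y)) = fun y => c • (g ∘ (c • u)) y := rfl
  rw [hcomp, iteratedFDeriv_const_smul_apply' (hg.comp (c • u).contDiff).contDiffAt, norm_smul,
    Real.norm_eq_abs]
  calc |c| * ‖iteratedFDeriv ℝ n (g ∘ (c • u)) x‖
      ≤ |c| * (B * ‖c • u‖ ^ n) := by
        gcongr
        exact ((c • u).norm_iteratedFDeriv_comp_right_le hg x).trans
          (by gcongr; exact hB _)
    _ = |c| * (B * (|c| * ‖u‖) ^ n) := by
        rw [norm_smul, Real.norm_eq_abs]
    _ = B * |c| ^ (n + 1) * ‖u‖ ^ n := by ring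

end Composition

theorem norm_sum_smul_proj_le {ι : Type*} [Fintype ι] (a : ι → ℝ) :
    ‖∑ i, a i • (ContinuousLinearMap.proj i : (ι → ℝ) →L[ℝ] ℝ)‖ ≤ ∑ i, |a i| := by
  refine ContinuousLinearMap.opNorm_le_bound _ (by positivity) fun x => ?_
  simp only [_root_.sum_apply, smul_apply,
    ContinuousLinearMap.proj_apply, smul_eq_mul, sum_mul, Real.norm_eq_abs]
  refine (abs_sum_le_sum_abs _ _).trans (sum_le_sum fun i _ => ?_)
  rw [abs_mul]
  gcongr
  exact norm_le_pi_norm x i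

theorem sum_abs_intCast_pos {ι : Type*} [Fintype ι] {k : ι → ℤ} (hk : k ≠ 0) :
    0 < ∑ i, |(k i : ℝ)| := by
  obtain ⟨i, hi⟩ := Function.ne_iff.1 hk
  exact sum_pos' (fun i _ => abs_nonneg _) ⟨i, mem_univ i, abs_pos.2 (Int.cast_ne_zero.2 hi)⟩

theorem smallDivisor_eq_mul_comp {d : ℕ} {τ γ : ℝ} (ltil : ℝ → ℝ) (k : Fin d → ℤ)
    (hc : (∑ i, |(k i : ℝ)|) ^ τ / γ ≠ 0) :
    smallDivisor d τ γ ltil k = fun η => (∑ i, |(k i : ℝ)|) ^ τ / γ *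
      (fun t => (1 - ltil t) / t) ((∑ i, |(k i : ℝ)|) ^ τ / γ *
        (∑ i, (k i : ℝ) • ContinuousLinearMap.proj i : (Fin d → ℝ) →L[ℝ] ℝ) η) := by
  funext η
  simp only [smallDivisor, _root_.sum_apply, smul_apply, ContinuousLinearMap.proj_apply,
    smul_eq_mul]
  obtain ⟨hK, hγ⟩ := div_ne_zero_iff.1 hc
  -- on the hyperplane the right-hand side vanishes too, because `x / 0 = 0`
  split_ifs with h
  · simp [h]
  · field_simp

theorem div_rpow_pow_succ_mul_pow {K γ : ℝ} (hK : 0 < K) (hγ : 0 < γ) (τ : ℝ) (n : ℕ) :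
    (K ^ τ / γ) ^ (n + 1) * K ^ n = K ^ ((τ + 1) * n + τ) * γ ^ (-((n : ℝ) + 1)) := by
  rw [div_pow, ← Real.rpow_natCast (K ^ τ), ← Real.rpow_mul hK.le, ← Real.rpow_natCast γ,
    ← Real.rpow_natCast K, div_eq_mul_inv, ← Real.rpow_neg hγ.le, mul_right_comm,
    ← Real.rpow_add hK]
  push_cast
  ring_nf

/-- estimate (5.11) of the paper. For a smooth cut-off `l̃` with
`|l̃| ≤ 1`, `l̃ = 1` on `[-1/4, 1/4]`, and derivatives of order `≤ ℓ` bounded by `L`,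
the function `ψ_k` is `C^∞` and there is `C > 0` depending only on `ℓ` and `L` with
`‖D^n ψ_k(η)‖ ≤ C |k|₁^{(τ+1)n+τ} γ^{-(n+1)}` for all `n ≤ ℓ`. -/
theorem stmt_13 (ℓ : ℕ) (L : ℝ) :
    ∃ C : ℝ, 0 < C ∧
      ∀ ltil : ℝ → ℝ, ContDiff ℝ (⊤ : ℕ∞) ltil →
        (∀ x : ℝ, |ltil x| ≤ 1) →
        (∀ x : ℝ, |x| ≤ 1 / 4 → ltil x = 1) →
        (∀ p ≤ ℓ, ∀ x : ℝ, |iteratedDeriv p ltil x| ≤ L) →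
      ∀ d : ℕ, 1 ≤ d → ∀ τ γ : ℝ, 0 < τ → 0 < γ → γ < 1 →
      ∀ k : Fin d → ℤ, k ≠ 0 →
        ContDiff ℝ (⊤ : ℕ∞) (smallDivisor d τ γ ltil k) ∧
        ∀ n ≤ ℓ, ∀ η : Fin d → ℝ,
          ‖iteratedFDeriv ℝ n (smallDivisor d τ γ ltil k) η‖
            ≤ C * (∑ i, |(k i : ℝ)|) ^ ((τ + 1) * (n : ℝ) + τ) * γ ^ (-((n : ℝ) + 1)) := by
  refine ⟨(1 + |L|) * (ℓ + 1)! / (1 / 4) ^ (ℓ + 1), by positivity, ?_⟩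
  intro ltil hsm _ hflat hder d _ τ γ _ hγ _ k hk
  set K := ∑ i, |(k i : ℝ)|
  have hK : 0 < K := sum_abs_intCast_pos hk
  have hc : 0 < K ^ τ / γ := by positivity
  set u : (Fin d → ℝ) →L[ℝ] ℝ := ∑ i, (k i : ℝ) • ContinuousLinearMap.proj i
  have h1 : ∀ x, |x| < 1 / 4 → ltil x = 1 := fun x hx => hflat x hx.le
  have hφ : ContDiff ℝ (⊤ : ℕ∞) fun t => (1 - ltil t) / t := by
    refine contDiff_one_sub_div hsm ?_
    filter_upwards [(isOpen_lt continuous_abs continuous_const).mem_nhds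
      (by norm_num : |(0 : ℝ)| < 1 / 4)] with x hx using h1 x hx
  rw [smallDivisor_eq_mul_comp ltil k hc.ne']
  refine ⟨contDiff_const.mul (hφ.comp (contDiff_const.mul u.contDiff)), fun n hn η => ?_⟩
  have hM : ∀ i ≤ n, ∀ x, ‖iteratedFDeriv ℝ i (fun s => 1 - ltil s) x‖ ≤ 1 + |L| :=
    fun i hi x => (norm_iteratedFDeriv_one_sub_le hder (hi.trans hn) x).trans
      (by gcongr; exact le_abs_self L)
  calc _ ≤ (1 + |L|) * (n + 1)! / (1 / 4) ^ (n + 1) * |K ^ τ / γ| ^ (n + 1) * ‖u‖ ^ n :=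
        norm_iteratedFDeriv_mul_comp_smul_le (hφ.of_le (mod_cast le_top))
          (norm_iteratedFDeriv_one_sub_div_le (hsm.of_le (mod_cast le_top)) (by norm_num)
            (by norm_num) h1 hM) _ u η
    _ ≤ (1 + |L|) * (ℓ + 1)! / (1 / 4) ^ (ℓ + 1) * (K ^ τ / γ) ^ (n + 1) * K ^ n := by
        rw [abs_of_pos hc]
        have hfact : ((n + 1)! : ℝ) ≤ (ℓ + 1)! := mod_cast factorial_le (by omega)
        have hpow : (1 / 4 : ℝ) ^ (ℓ + 1) ≤ (1 / 4) ^ (n + 1) :=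
          pow_le_pow_of_le_one (by norm_num) (by norm_num) (by omega)
        gcongr
        exact norm_sum_smul_proj_le _
    _ = _ := by rw [mul_assoc, div_rpow_pow_succ_mul_pow hK hγ, ← mul_assoc]
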